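/- Let X be a real Banach space containing an isomorphic copy of ℓ₁, i.e., there is a closed subspace of X that is linearly homeomorphic to ℓ₁(ℕ, ℝ). Then there exists an equivalent norm N on X such that (X, N) contains a Δ-point: there is x₀ with N(x₀) = 1 such that for every x* ∈ X* with sup_{y ∈ B_N} x*(y) = 1 and every ε > 0 with x*(x₀) > 1 − ε, one has sup{ N(x₀ − y) : y ∈ B_N, x*(y) > 1 − ε } = 2. -/

import Mathlib

open NormedSpace Topology Filter
open scoped ENNReal
set_option synthInstance.maxHeartbeats 1000000
set_option maxHeartbeats 1000000

/-- `N` is an equivalent norm on the normed space `Z`. -/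
def IsEquivNorm (Z : Type*) [NormedAddCommGroup Z] [NormedSpace ℝ Z] (N : Z → ℝ) : Prop :=
  (∀ z w : Z, N (z + w) ≤ N z + N w) ∧ (∀ (a : ℝ) (z : Z), N (a • z) = |a| * N z) ∧
  (∃ c C : ℝ, 0 < c ∧ 0 < C ∧ ∀ z : Z, c * ‖z‖ ≤ N z ∧ N z ≤ C * ‖z‖)

/-- The norm `N` on `Z` admits a Δ-point: a point `z₀` with `N z₀ = 1` such that every
slice of the `N`-unit ball containing `z₀` (determined by a functional whose supremum on
the `N`-unit ball is `1`) contains points whose `N`-distance to `z₀` is arbitrarily close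
to `2`. -/
def HasDeltaPointForNorm (Z : Type*) [NormedAddCommGroup Z] [NormedSpace ℝ Z]
    (N : Z → ℝ) : Prop :=
  ∃ z₀ : Z, N z₀ = 1 ∧ ∀ f : Z →L[ℝ] ℝ, sSup (f '' {y : Z | N y ≤ 1}) = 1 →
    ∀ ε : ℝ, 0 < ε → 1 - ε < f z₀ →
      sSup ((fun y => N (z₀ - y)) '' {y : Z | N y ≤ 1 ∧ 1 - ε < f y}) = 2

noncomputable section
namespace DeltaRenorm

abbrev L1 : Type := lp (fun _ : ℕ => ℝ) 1

lemma L1.sum_abs_le_norm (x : L1) (s : Finset ℕ) : ∑ k ∈ s, |x k| ≤ ‖x‖ := by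
  have h := lp.hasSum_norm (p := 1) (by norm_num) x
  simp only [ENNReal.toReal_one, Real.rpow_one] at h
  have := sum_le_hasSum s (fun i _ => norm_nonneg (x i)) h
  calc ∑ k ∈ s, |x k| = ∑ k ∈ s, ‖x k‖ := by simp [Real.norm_eq_abs]
  _ ≤ ‖x‖ := this

/-- functional on ℓ₁ given by finitely many coefficients `g` on `s`. -/
def phiOf (g : ℕ → ℝ) (s : Finset ℕ) : L1 →L[ℝ] ℝ :=
  LinearMap.mkContinuous
    { toFun := fun x => ∑ k ∈ s, g k * x k
      map_add' := by intro x y; simp [mul_add, Finset.sum_add_distrib]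
      map_smul' := by
        intro c x
        simp only [lp.coeFn_smul, Pi.smul_apply, smul_eq_mul, RingHom.id_apply, Finset.mul_sum]
        exact Finset.sum_congr rfl (fun k _ => by ring) }
    (∑ k ∈ s, |g k|) (fun x => by
      simp only [LinearMap.coe_mk, AddHom.coe_mk, Real.norm_eq_abs]
      calc |∑ k ∈ s, g k * x k| ≤ ∑ k ∈ s, |g k * x k| := Finset.abs_sum_le_sum_abs _ _
      _ ≤ ∑ k ∈ s, |g k| * ‖x‖ := by
          refine Finset.sum_le_sum (fun k _ => ?_)
          rw [abs_mul]
          exact mul_le_mul_of_nonneg_left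
            (by simpa using lp.norm_apply_le_norm one_ne_zero x k) (abs_nonneg _)
      _ = (∑ k ∈ s, |g k|) * ‖x‖ := (Finset.sum_mul ..).symm)

lemma phiOf_apply (g : ℕ → ℝ) (s : Finset ℕ) (x : L1) :
    phiOf g s x = ∑ k ∈ s, g k * x k := rfl

lemma phiOf_bound (g : ℕ → ℝ) (s : Finset ℕ) (hg : ∀ k, |g k| ≤ 1) (x : L1) :
    |phiOf g s x| ≤ ‖x‖ := by
  rw [phiOf_apply]
  calc |∑ k ∈ s, g k * x k| ≤ ∑ k ∈ s, |g k * x k| := Finset.abs_sum_le_sum_abs _ _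
  _ ≤ ∑ k ∈ s, |x k| := by
      refine Finset.sum_le_sum (fun k _ => ?_)
      rw [abs_mul]
      exact mul_le_of_le_one_left (abs_nonneg _) (hg k)
  _ ≤ ‖x‖ := L1.sum_abs_le_norm x s

lemma phiOf_norm_le (g : ℕ → ℝ) (s : Finset ℕ) (hg : ∀ k, |g k| ≤ 1) :
    ‖phiOf g s‖ ≤ 1 := by
  refine ContinuousLinearMap.opNorm_le_bound _ zero_le_one (fun x => ?_)
  simpa [Real.norm_eq_abs] using phiOf_bound g s hg x

lemma phiOf_single (g : ℕ → ℝ) (s : Finset ℕ) (k : ℕ) :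
    phiOf g s (lp.single 1 k 1) = if k ∈ s then g k else 0 := by
  rw [phiOf_apply]
  by_cases hk : k ∈ s
  · rw [if_pos hk]
    rw [Finset.sum_eq_single k]
    · simp [lp.single_apply_self]
    · intro j hj hjk
      rw [lp.single_apply_ne 1 k _ hjk, mul_zero]
    · intro h; exact absurd hk h
  · rw [if_neg hk]
    refine Finset.sum_eq_zero (fun j hj => ?_)
    rw [lp.single_apply_ne 1 k _ (by rintro rfl; exact hk hj), mul_zero]

section Constr

variable {X : Type*} [NormedAddCommGroup X] [NormedSpace ℝ X]
variable (Y : Submodule ℝ X) (e : L1 ≃L[ℝ] Y)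

/-- inclusion of ℓ₁ into X -/
def T : L1 →L[ℝ] X := Y.subtypeL.comp (e : L1 →L[ℝ] Y)

def κ (n i : ℕ) : ℕ := Nat.pair n i + 1

lemma κ_ne_zero (n i : ℕ) : κ n i ≠ 0 := Nat.succ_ne_zero _

lemma κ_inj {n i m j : ℕ} (h : κ n i = κ m j) : n = m ∧ i = j := by
  have := Nat.succ_injective h
  have := Nat.pair_eq_pair.mp this
  exact this

def Mn (n : ℕ) : ℕ := n + 2

lemma Mn_pos (n : ℕ) : 0 < (Mn n : ℝ) := by unfold Mn; positivity

def bv (k : ℕ) : X := T Y e (lp.single 1 k 1)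

def z0 : X := bv Y e 0

def u (n i : ℕ) : X :=
  z0 Y e + bv Y e (κ n i) - (Mn n : ℝ)⁻¹ • ∑ j ∈ Finset.range (Mn n), bv Y e (κ n j)

lemma norm_bv_le (k : ℕ) : ‖bv Y e k‖ ≤ ‖T Y e‖ := by
  have h1 : ‖(lp.single 1 k (1:ℝ) : L1)‖ = 1 := by
    have h2 : (0:ℝ) < (1:ℝ≥0∞).toReal := by norm_num
    have := lp.norm_single (E := fun _ : ℕ => ℝ) (p := 1) (by norm_num) k (1:ℝ)
    simpa using this
  calc ‖T Y e (lp.single 1 k 1)‖ ≤ ‖T Y e‖ * ‖(lp.single 1 k (1:ℝ) : L1)‖ :=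
        (T Y e).le_opNorm _
  _ = ‖T Y e‖ := by rw [h1, mul_one]

def Uc : ℝ := 3 * ‖T Y e‖ + 1

lemma Uc_pos : 0 < Uc Y e := by
  have := norm_nonneg (T Y e); unfold Uc; linarith

lemma norm_u_le (n i : ℕ) : ‖u Y e n i‖ ≤ Uc Y e := by
  have hb := norm_bv_le Y e
  have hT : 0 ≤ ‖T Y e‖ := norm_nonneg _
  have hsum : ‖∑ j ∈ Finset.range (Mn n), bv Y e (κ n j)‖ ≤ (Mn n : ℝ) * ‖T Y e‖ := by
    calc ‖∑ j ∈ Finset.range (Mn n), bv Y e (κ n j)‖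
        ≤ ∑ j ∈ Finset.range (Mn n), ‖bv Y e (κ n j)‖ := norm_sum_le _ _
    _ ≤ ∑ _j ∈ Finset.range (Mn n), ‖T Y e‖ := Finset.sum_le_sum (fun j _ => hb _)
    _ = (Mn n : ℝ) * ‖T Y e‖ := by simp [mul_comm]
  have h3 : ‖(Mn n : ℝ)⁻¹ • ∑ j ∈ Finset.range (Mn n), bv Y e (κ n j)‖ ≤ ‖T Y e‖ := by
    rw [norm_smul, Real.norm_eq_abs, abs_of_pos (inv_pos.mpr (Mn_pos n))]
    calc (Mn n : ℝ)⁻¹ * ‖∑ j ∈ Finset.range (Mn n), bv Y e (κ n j)‖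
        ≤ (Mn n : ℝ)⁻¹ * ((Mn n : ℝ) * ‖T Y e‖) :=
          mul_le_mul_of_nonneg_left hsum (le_of_lt (inv_pos.mpr (Mn_pos n)))
    _ = ‖T Y e‖ := by rw [inv_mul_cancel_left₀ (Mn_pos n).ne']
  calc ‖u Y e n i‖ ≤ ‖z0 Y e + bv Y e (κ n i)‖ +
        ‖(Mn n : ℝ)⁻¹ • ∑ j ∈ Finset.range (Mn n), bv Y e (κ n j)‖ := norm_sub_le _ _
  _ ≤ (‖z0 Y e‖ + ‖bv Y e (κ n i)‖) + ‖T Y e‖ := by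
      have := norm_add_le (z0 Y e) (bv Y e (κ n i)); linarith
  _ ≤ 3 * ‖T Y e‖ + 1 := by
      have h0 : ‖z0 Y e‖ ≤ ‖T Y e‖ := hb 0
      have h1 : ‖bv Y e (κ n i)‖ ≤ ‖T Y e‖ := hb _
      linarith
  _ = Uc Y e := rfl

/-- the key averaging identity -/
lemma avg_u (n : ℕ) :
    ∑ i ∈ Finset.range (Mn n), (Mn n : ℝ)⁻¹ • u Y e n i = z0 Y e := by
  have hM : (Mn n : ℝ) ≠ 0 := (Mn_pos n).ne'
  set W := ∑ j ∈ Finset.range (Mn n), bv Y e (κ n j) with hW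
  have : ∑ i ∈ Finset.range (Mn n), (Mn n : ℝ)⁻¹ • u Y e n i
      = (Mn n : ℝ)⁻¹ • ∑ i ∈ Finset.range (Mn n), u Y e n i := by
    rw [Finset.smul_sum]
  rw [this]
  have hsum : ∑ i ∈ Finset.range (Mn n), u Y e n i
      = (Mn n : ℝ) • z0 Y e := by
    unfold u
    rw [Finset.sum_sub_distrib, Finset.sum_add_distrib]
    simp only [Finset.sum_const, Finset.card_range, ← hW]
    rw [← Nat.cast_smul_eq_nsmul ℝ (Mn n) ((Mn n : ℝ)⁻¹ • W), smul_smul,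
      mul_inv_cancel₀ hM, one_smul, ← Nat.cast_smul_eq_nsmul ℝ (Mn n) (z0 Y e)]
    abel
  rw [hsum, smul_smul, inv_mul_cancel₀ hM, one_smul]

def Kc : ℝ := max ‖(e.symm : Y →L[ℝ] L1)‖ 1

lemma Kc_pos : 0 < Kc Y e := lt_of_lt_of_le one_pos (le_max_right _ _)

def c0 : ℝ := min (Kc Y e) (Uc Y e)⁻¹

lemma c0_pos : 0 < c0 Y e := lt_min (Kc_pos Y e) (inv_pos.mpr (Uc_pos Y e))

/-- the admissible decompositions defining the new norm -/
def A (x : X) : Set ℝ :=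
  { t | ∃ (s : Finset (ℕ × ℕ)) (c : ℕ × ℕ → ℝ) (v : X),
      (∀ p ∉ s, c p = 0) ∧ x = v + ∑ p ∈ s, c p • u Y e p.1 p.2 ∧
      t = Kc Y e * ‖v‖ + ∑ p ∈ s, |c p| }

lemma A_self (x : X) : Kc Y e * ‖x‖ ∈ A Y e x :=
  ⟨∅, 0, x, fun _ _ => rfl, by simp, by simp⟩

lemma A_nonempty (x : X) : (A Y e x).Nonempty := ⟨_, A_self Y e x⟩

lemma A_lb {x : X} {t : ℝ} (ht : t ∈ A Y e x) : c0 Y e * ‖x‖ ≤ t := by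
  obtain ⟨s, c, v, hc0, hx, ht⟩ := ht
  have hU : 0 < Uc Y e := Uc_pos Y e
  have hsum : ‖∑ p ∈ s, c p • u Y e p.1 p.2‖ ≤ Uc Y e * ∑ p ∈ s, |c p| := by
    calc ‖∑ p ∈ s, c p • u Y e p.1 p.2‖ ≤ ∑ p ∈ s, ‖c p • u Y e p.1 p.2‖ := norm_sum_le _ _
    _ ≤ ∑ p ∈ s, |c p| * Uc Y e := by
        refine Finset.sum_le_sum (fun p _ => ?_)
        rw [norm_smul, Real.norm_eq_abs]
        exact mul_le_mul_of_nonneg_left (norm_u_le Y e p.1 p.2) (abs_nonneg _)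
    _ = Uc Y e * ∑ p ∈ s, |c p| := by rw [← Finset.sum_mul]; ring
  have hxn : ‖x‖ ≤ ‖v‖ + Uc Y e * ∑ p ∈ s, |c p| := by
    calc ‖x‖ ≤ ‖v‖ + ‖∑ p ∈ s, c p • u Y e p.1 p.2‖ := hx ▸ norm_add_le _ _
    _ ≤ ‖v‖ + Uc Y e * ∑ p ∈ s, |c p| := by linarith
  have hcK : c0 Y e ≤ Kc Y e := min_le_left _ _
  have hcU : c0 Y e * Uc Y e ≤ 1 := by
    calc c0 Y e * Uc Y e ≤ (Uc Y e)⁻¹ * Uc Y e :=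
      mul_le_mul_of_nonneg_right (min_le_right _ _) hU.le
    _ = 1 := inv_mul_cancel₀ hU.ne'
  have h0c : 0 ≤ c0 Y e := (c0_pos Y e).le
  have habs : 0 ≤ ∑ p ∈ s, |c p| := Finset.sum_nonneg (fun p _ => abs_nonneg _)
  calc c0 Y e * ‖x‖ ≤ c0 Y e * (‖v‖ + Uc Y e * ∑ p ∈ s, |c p|) :=
        mul_le_mul_of_nonneg_left hxn h0c
  _ = c0 Y e * ‖v‖ + (c0 Y e * Uc Y e) * ∑ p ∈ s, |c p| := by ring
  _ ≤ Kc Y e * ‖v‖ + 1 * ∑ p ∈ s, |c p| := by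
      have := mul_le_mul_of_nonneg_right hcK (norm_nonneg v)
      have := mul_le_mul_of_nonneg_right hcU habs
      linarith
  _ = t := by rw [ht]; ring

lemma A_bddBelow (x : X) : BddBelow (A Y e x) := ⟨c0 Y e * ‖x‖, fun _ ht => A_lb Y e ht⟩

/-- the new norm -/
def NN (x : X) : ℝ := sInf (A Y e x)

lemma NN_le_of_mem {x : X} {t : ℝ} (ht : t ∈ A Y e x) : NN Y e x ≤ t :=
  csInf_le (A_bddBelow Y e x) ht

lemma NN_le (x : X) : NN Y e x ≤ Kc Y e * ‖x‖ := NN_le_of_mem Y e (A_self Y e x)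

lemma le_NN (x : X) : c0 Y e * ‖x‖ ≤ NN Y e x :=
  le_csInf (A_nonempty Y e x) (fun _ ht => A_lb Y e ht)

lemma NN_nonneg (x : X) : 0 ≤ NN Y e x :=
  le_trans (mul_nonneg (c0_pos Y e).le (norm_nonneg x)) (le_NN Y e x)

lemma A_add {x₁ x₂ : X} {t₁ t₂ : ℝ} (h₁ : t₁ ∈ A Y e x₁) (h₂ : t₂ ∈ A Y e x₂) :
    ∃ t ∈ A Y e (x₁ + x₂), t ≤ t₁ + t₂ := by
  obtain ⟨s₁, c₁, v₁, hz₁, hx₁, ht₁⟩ := h₁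
  obtain ⟨s₂, c₂, v₂, hz₂, hx₂, ht₂⟩ := h₂
  refine ⟨Kc Y e * ‖v₁ + v₂‖ + ∑ p ∈ s₁ ∪ s₂, |c₁ p + c₂ p|,
    ⟨s₁ ∪ s₂, c₁ + c₂, v₁ + v₂, fun p hp => ?_, ?_, rfl⟩, ?_⟩
  · have hp1 : p ∉ s₁ := fun h => hp (Finset.mem_union_left _ h)
    have hp2 : p ∉ s₂ := fun h => hp (Finset.mem_union_right _ h)
    simp [hz₁ p hp1, hz₂ p hp2]
  · have e₁ : ∑ p ∈ s₁ ∪ s₂, c₁ p • u Y e p.1 p.2 = ∑ p ∈ s₁, c₁ p • u Y e p.1 p.2 :=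
      (Finset.sum_subset Finset.subset_union_left
        (fun p _ hp => by rw [hz₁ p hp, zero_smul])).symm
    have e₂ : ∑ p ∈ s₁ ∪ s₂, c₂ p • u Y e p.1 p.2 = ∑ p ∈ s₂, c₂ p • u Y e p.1 p.2 :=
      (Finset.sum_subset Finset.subset_union_right
        (fun p _ hp => by rw [hz₂ p hp, zero_smul])).symm
    rw [hx₁, hx₂, ← e₁, ← e₂]
    simp only [Pi.add_apply, add_smul, Finset.sum_add_distrib]
    abel
  · rw [ht₁, ht₂]
    have hnorm : ‖v₁ + v₂‖ ≤ ‖v₁‖ + ‖v₂‖ := norm_add_le _ _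
    have habs : ∑ p ∈ s₁ ∪ s₂, |c₁ p + c₂ p| ≤ ∑ p ∈ s₁, |c₁ p| + ∑ p ∈ s₂, |c₂ p| := by
      have e₁ : ∑ p ∈ s₁ ∪ s₂, |c₁ p| = ∑ p ∈ s₁, |c₁ p| :=
        (Finset.sum_subset Finset.subset_union_left
          (fun p _ hp => by rw [hz₁ p hp, abs_zero])).symm
      have e₂ : ∑ p ∈ s₁ ∪ s₂, |c₂ p| = ∑ p ∈ s₂, |c₂ p| :=
        (Finset.sum_subset Finset.subset_union_right
          (fun p _ hp => by rw [hz₂ p hp, abs_zero])).symm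
      calc ∑ p ∈ s₁ ∪ s₂, |c₁ p + c₂ p| ≤ ∑ p ∈ s₁ ∪ s₂, (|c₁ p| + |c₂ p|) :=
            Finset.sum_le_sum (fun p _ => abs_add_le _ _)
      _ = ∑ p ∈ s₁, |c₁ p| + ∑ p ∈ s₂, |c₂ p| := by rw [Finset.sum_add_distrib, e₁, e₂]
    have hK : 0 ≤ Kc Y e := (Kc_pos Y e).le
    have := mul_le_mul_of_nonneg_left hnorm hK
    linarith

lemma NN_add (x₁ x₂ : X) : NN Y e (x₁ + x₂) ≤ NN Y e x₁ + NN Y e x₂ := by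
  have key : ∀ t₁ ∈ A Y e x₁, ∀ t₂ ∈ A Y e x₂, NN Y e (x₁ + x₂) ≤ t₁ + t₂ := by
    intro t₁ h₁ t₂ h₂
    obtain ⟨t, ht, hle⟩ := A_add Y e h₁ h₂
    exact (NN_le_of_mem Y e ht).trans hle
  have h1 : ∀ t₁ ∈ A Y e x₁, NN Y e (x₁ + x₂) - t₁ ≤ NN Y e x₂ := by
    intro t₁ h₁
    refine le_csInf (A_nonempty Y e x₂) (fun t₂ h₂ => ?_)
    have := key t₁ h₁ t₂ h₂
    linarith
  have h2 : NN Y e (x₁ + x₂) - NN Y e x₂ ≤ NN Y e x₁ := by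
    refine le_csInf (A_nonempty Y e x₁) (fun t₁ h₁ => ?_)
    have := h1 t₁ h₁
    linarith
  linarith

lemma A_smul {x : X} {t : ℝ} (a : ℝ) (ht : t ∈ A Y e x) : |a| * t ∈ A Y e (a • x) := by
  obtain ⟨s, c, v, hz, hx, htt⟩ := ht
  refine ⟨s, fun p => a * c p, a • v, fun p hp => by
    show a * c p = 0; rw [hz p hp, mul_zero], ?_, ?_⟩
  · rw [hx, smul_add, Finset.smul_sum]
    simp only [smul_smul]
  · rw [htt, norm_smul, Real.norm_eq_abs, mul_add, Finset.mul_sum]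
    simp only [abs_mul]
    ring_nf

lemma NN_zero : NN Y e 0 = 0 := by
  refine le_antisymm ?_ (NN_nonneg Y e 0)
  have : (0:ℝ) ∈ A Y e 0 := ⟨∅, 0, 0, fun _ _ => rfl, by simp, by simp⟩
  exact NN_le_of_mem Y e this

lemma NN_smul (a : ℝ) (x : X) : NN Y e (a • x) = |a| * NN Y e x := by
  rcases eq_or_ne a 0 with rfl | ha
  · simp [NN_zero]
  have h1 : ∀ (b : ℝ) (y : X), NN Y e (b • y) ≤ |b| * NN Y e y := by
    intro b y
    rcases eq_or_ne b 0 with rfl | hb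
    · simp [NN_zero, NN_nonneg]
    have hb' : 0 < |b| := abs_pos.mpr hb
    rw [← sub_nonneg]
    have : ∀ t ∈ A Y e y, NN Y e (b • y) ≤ |b| * t := fun t ht =>
      NN_le_of_mem Y e (A_smul Y e b ht)
    have h2 : NN Y e (b • y) / |b| ≤ NN Y e y := by
      refine le_csInf (A_nonempty Y e y) (fun t ht => ?_)
      rw [div_le_iff₀ hb']
      calc NN Y e (b • y) ≤ |b| * t := this t ht
      _ = t * |b| := mul_comm _ _
    have := (div_le_iff₀ hb').mp h2
    linarith
  refine le_antisymm (h1 a x) ?_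
  have h2 : NN Y e x = NN Y e (a⁻¹ • (a • x)) := by rw [smul_smul, inv_mul_cancel₀ ha, one_smul]
  have h3 : NN Y e x ≤ |a⁻¹| * NN Y e (a • x) := h2 ▸ h1 a⁻¹ (a • x)
  have ha' : 0 < |a| := abs_pos.mpr ha
  rw [abs_inv] at h3
  have := mul_le_mul_of_nonneg_left h3 ha'.le
  rw [← mul_assoc, mul_inv_cancel₀ ha'.ne', one_mul] at this
  exact this

lemma NN_u_le_one (n i : ℕ) : NN Y e (u Y e n i) ≤ 1 := by
  classical
  set c : ℕ × ℕ → ℝ := fun p => if p = (n, i) then 1 else 0 with hc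
  refine NN_le_of_mem Y e ⟨{(n, i)}, c, 0, fun p hp => ?_, ?_, ?_⟩
  · simp only [hc]
    exact if_neg (by simpa using hp)
  · simp [hc]
  · simp [hc]

lemma NN_z0_le_one : NN Y e (z0 Y e) ≤ 1 := by
  classical
  set s : Finset (ℕ × ℕ) := (Finset.range (Mn 0)).image (fun i => ((0:ℕ), i)) with hs
  set c : ℕ × ℕ → ℝ := fun p => if p ∈ s then (Mn 0 : ℝ)⁻¹ else 0 with hc
  have hinj : ∀ x ∈ Finset.range (Mn 0), ∀ y ∈ Finset.range (Mn 0),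
      ((0:ℕ), x) = ((0:ℕ), y) → x = y := fun x _ y _ h => (Prod.ext_iff.mp h).2
  have hcval : ∀ i ∈ Finset.range (Mn 0), c ((0:ℕ), i) = (Mn 0 : ℝ)⁻¹ := by
    intro i hi
    simp only [hc]
    exact if_pos (by rw [hs]; exact Finset.mem_image_of_mem _ hi)
  refine NN_le_of_mem Y e ⟨s, c, 0, fun p hp => by simp only [hc]; exact if_neg hp, ?_, ?_⟩
  · rw [zero_add, hs, Finset.sum_image hinj, ← avg_u Y e 0]
    exact Finset.sum_congr rfl (fun i hi => by rw [hcval i hi])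
  · rw [norm_zero, mul_zero, zero_add, hs, Finset.sum_image hinj]
    have habs : ∀ i ∈ Finset.range (Mn 0), |c ((0:ℕ), i)| = (Mn 0 : ℝ)⁻¹ := fun i hi => by
      rw [hcval i hi]; exact abs_of_pos (inv_pos.mpr (Mn_pos 0))
    rw [Finset.sum_congr rfl habs, Finset.sum_const, Finset.card_range, nsmul_eq_mul,
      mul_inv_cancel₀ (Mn_pos 0).ne']

lemma le_NN_of (φ : X →L[ℝ] ℝ) (hφ : ‖φ‖ ≤ Kc Y e)
    (hu : ∀ n i, |φ (u Y e n i)| ≤ 1) (x : X) : φ x ≤ NN Y e x := by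
  refine le_csInf (A_nonempty Y e x) ?_
  rintro t ⟨s, c, v, hz, hx, ht⟩
  rw [hx, map_add, map_sum]
  have h1 : φ v ≤ Kc Y e * ‖v‖ := by
    calc φ v ≤ |φ v| := le_abs_self _
    _ ≤ ‖φ‖ * ‖v‖ := by
        rw [← Real.norm_eq_abs]
        exact φ.le_opNorm v
    _ ≤ Kc Y e * ‖v‖ := mul_le_mul_of_nonneg_right hφ (norm_nonneg v)
  have h2 : ∑ p ∈ s, φ (c p • u Y e p.1 p.2) ≤ ∑ p ∈ s, |c p| := by
    refine Finset.sum_le_sum (fun p _ => ?_)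
    rw [map_smul, smul_eq_mul]
    calc c p * φ (u Y e p.1 p.2) ≤ |c p * φ (u Y e p.1 p.2)| := le_abs_self _
    _ = |c p| * |φ (u Y e p.1 p.2)| := abs_mul _ _
    _ ≤ |c p| * 1 := mul_le_mul_of_nonneg_left (hu p.1 p.2) (abs_nonneg _)
    _ = |c p| := mul_one _
  rw [ht]
  linarith

lemma exists_ext (φhat : L1 →L[ℝ] ℝ) (h1 : ‖φhat‖ ≤ 1) :
    ∃ φ : X →L[ℝ] ℝ, (∀ x : L1, φ (T Y e x) = φhat x) ∧ ‖φ‖ ≤ Kc Y e := by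
  obtain ⟨φ, hext, hnorm⟩ := exists_extension_norm_eq Y (φhat.comp (e.symm : Y →L[ℝ] L1))
  refine ⟨φ, fun x => ?_, ?_⟩
  · have h := hext (e x)
    have h2 : T Y e x = ((e x : Y) : X) := rfl
    rw [h2, h]
    simp
  · rw [hnorm]
    calc ‖φhat.comp (e.symm : Y →L[ℝ] L1)‖ ≤ ‖φhat‖ * ‖(e.symm : Y →L[ℝ] L1)‖ :=
          ContinuousLinearMap.opNorm_comp_le _ _
    _ ≤ 1 * ‖(e.symm : Y →L[ℝ] L1)‖ := mul_le_mul_of_nonneg_right h1 (norm_nonneg (e.symm : Y →L[ℝ] L1))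
    _ = ‖(e.symm : Y →L[ℝ] L1)‖ := one_mul _
    _ ≤ Kc Y e := le_max_left _ _

lemma phi_bv {φ : X →L[ℝ] ℝ} {φhat : L1 →L[ℝ] ℝ}
    (hφT : ∀ x : L1, φ (T Y e x) = φhat x) (k : ℕ) :
    φ (bv Y e k) = φhat (lp.single 1 k 1) := hφT _

lemma phi_u {φ : X →L[ℝ] ℝ} {φhat : L1 →L[ℝ] ℝ}
    (hφT : ∀ x : L1, φ (T Y e x) = φhat x) (m j : ℕ) :
    φ (u Y e m j) = φhat (lp.single 1 0 1) + φhat (lp.single 1 (κ m j) 1)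
      - (Mn m : ℝ)⁻¹ * ∑ j' ∈ Finset.range (Mn m), φhat (lp.single 1 (κ m j') 1) := by
  unfold u z0
  rw [map_sub, map_add, map_smul, map_sum, smul_eq_mul]
  rw [phi_bv Y e hφT, phi_bv Y e hφT]
  congr 1
  congr 1
  exact Finset.sum_congr rfl (fun j' _ => phi_bv Y e hφT (κ m j'))

def Fg : L1 →L[ℝ] ℝ := phiOf (fun _ => 1) {0}

lemma Fg_norm : ‖Fg‖ ≤ 1 := phiOf_norm_le _ _ (fun _ => by norm_num)

lemma Fg_single (k : ℕ) : Fg (lp.single 1 k 1) = if k = 0 then 1 else 0 := by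
  rw [Fg, phiOf_single]
  simp [Finset.mem_singleton]

lemma NN_z0_eq_one : NN Y e (z0 Y e) = 1 := by
  refine le_antisymm (NN_z0_le_one Y e) ?_
  obtain ⟨φ, hφT, hφn⟩ := exists_ext Y e Fg Fg_norm
  have hu : ∀ n i, |φ (u Y e n i)| ≤ 1 := by
    intro n i
    rw [phi_u Y e hφT]
    rw [Fg_single, Fg_single]
    have hsum : ∑ j' ∈ Finset.range (Mn n), Fg (lp.single 1 (κ n j') 1) = 0 := by
      refine Finset.sum_eq_zero (fun j' _ => ?_)
      rw [Fg_single, if_neg (κ_ne_zero n j')]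
    rw [hsum, if_pos rfl, if_neg (κ_ne_zero n i)]
    norm_num
  have h1 : φ (z0 Y e) = 1 := by
    have : φ (z0 Y e) = Fg (lp.single 1 0 1) := phi_bv Y e hφT 0
    rw [this, Fg_single, if_pos rfl]
  have := le_NN_of Y e φ hφn hu (z0 Y e)
  rw [h1] at this
  exact this

/-- coefficient of the level-`n` slice functionals -/
def cM (n : ℕ) : ℝ := (Mn n : ℝ) / ((Mn n : ℝ) + 2)

lemma cM_pos (n : ℕ) : 0 < cM n := div_pos (Mn_pos n) (by have := Mn_pos n; linarith)

lemma cM_le_one (n : ℕ) : cM n ≤ 1 := by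
  rw [cM, div_le_one (by have := Mn_pos n; linarith)]
  linarith

def sG (n : ℕ) : Finset ℕ := insert 0 ((Finset.range (Mn n)).image (κ n))

lemma mem_sG_iff (n m j : ℕ) : κ m j ∈ sG n ↔ m = n ∧ j < Mn n := by
  rw [sG, Finset.mem_insert]
  constructor
  · rintro (h | h)
    · exact absurd h (κ_ne_zero m j)
    · obtain ⟨j', hj', hjj⟩ := Finset.mem_image.mp h
      obtain ⟨hnm, hjeq⟩ := κ_inj hjj
      exact ⟨hnm.symm, hjeq ▸ Finset.mem_range.mp hj'⟩
  · rintro ⟨rfl, hj⟩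
    exact Or.inr (Finset.mem_image_of_mem _ (Finset.mem_range.mpr hj))

def GG (n i : ℕ) : L1 →L[ℝ] ℝ :=
  phiOf (fun k => if k = κ n i then -(cM n) else cM n) (sG n)

lemma GG_norm (n i : ℕ) : ‖GG n i‖ ≤ 1 := by
  refine phiOf_norm_le _ _ (fun k => ?_)
  have h1 := cM_pos n
  have h2 := cM_le_one n
  split <;> rw [abs_le] <;> constructor <;> linarith

lemma GG_single (n i k : ℕ) :
    GG n i (lp.single 1 k 1) = if k ∈ sG n then (if k = κ n i then -(cM n) else cM n) else 0 := by
  rw [GG, phiOf_single]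

lemma GG_single_zero (n i : ℕ) : GG n i (lp.single 1 0 1) = cM n := by
  rw [GG_single, if_pos (show (0:ℕ) ∈ sG n by rw [sG]; exact Finset.mem_insert_self 0 _),
    if_neg (Ne.symm (κ_ne_zero n i))]

lemma GG_single_κ (n i m j : ℕ) :
    GG n i (lp.single 1 (κ m j) 1) =
      if m = n ∧ j < Mn n then (if j = i then -(cM n) else cM n) else 0 := by
  rw [GG_single]
  by_cases h : m = n ∧ j < Mn n
  · rw [if_pos ((mem_sG_iff n m j).mpr h), if_pos h]
    obtain ⟨rfl, _⟩ := h
    by_cases hji : j = i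
    · rw [if_pos hji, if_pos (by rw [hji])]
    · rw [if_neg hji, if_neg (fun hc => hji (κ_inj hc).2)]
  · rw [if_neg (fun hc => h ((mem_sG_iff n m j).mp hc)), if_neg h]

lemma GG_sum_level (n i : ℕ) (hi : i < Mn n) :
    ∑ j' ∈ Finset.range (Mn n), GG n i (lp.single 1 (κ n j') 1)
      = ((Mn n : ℝ) - 2) * cM n := by
  have h1 : ∀ j' ∈ Finset.range (Mn n),
      GG n i (lp.single 1 (κ n j') 1) = cM n + (if j' = i then -(2 * cM n) else 0) := by
    intro j' hj'
    rw [GG_single_κ n i n j', if_pos ⟨rfl, Finset.mem_range.mp hj'⟩]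
    by_cases hji : j' = i
    · rw [if_pos hji, if_pos hji]; ring
    · rw [if_neg hji, if_neg hji]; ring
  rw [Finset.sum_congr rfl h1, Finset.sum_add_distrib, Finset.sum_const, Finset.card_range,
    Finset.sum_ite_eq' (Finset.range (Mn n)) i (fun _ => -(2 * cM n)),
    if_pos (Finset.mem_range.mpr hi), nsmul_eq_mul]
  ring

lemma GG_sum_level_ne (n i m : ℕ) (hm : m ≠ n) :
    ∑ j' ∈ Finset.range (Mn m), GG n i (lp.single 1 (κ m j') 1) = 0 := by
  refine Finset.sum_eq_zero (fun j' _ => ?_)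
  rw [GG_single_κ, if_neg (fun hc => hm hc.1)]

lemma dist_lower (n i : ℕ) (hi : i < Mn n) :
    2 * ((Mn n : ℝ) - 1) / ((Mn n : ℝ) + 2) ≤ NN Y e (z0 Y e - u Y e n i) := by
  obtain ⟨φ, hφT, hφn⟩ := exists_ext Y e (GG n i) (GG_norm n i)
  have hM2 : (2:ℝ) ≤ (Mn n : ℝ) := by unfold Mn; exact_mod_cast Nat.le_add_left 2 n
  have hM0 : (0:ℝ) < (Mn n : ℝ) := Mn_pos n
  have hcM : cM n = (Mn n : ℝ) / ((Mn n : ℝ) + 2) := rfl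
  -- |φ (u m j)| ≤ 1 in all cases
  have hu : ∀ m j, |φ (u Y e m j)| ≤ 1 := by
    intro m j
    rw [phi_u Y e hφT, GG_single_zero, GG_single_κ]
    by_cases hmn : m = n
    · subst hmn
      rw [GG_sum_level m i hi]
      have hM0' : (Mn m : ℝ) ≠ 0 := hM0.ne'
      have hP : (0:ℝ) < (Mn m : ℝ) + 2 := by linarith
      by_cases hj : j < Mn m
      · rw [if_pos ⟨rfl, hj⟩]
        by_cases hji : j = i
        · rw [if_pos hji]
          have hv : cM m + -(cM m) - (Mn m : ℝ)⁻¹ * (((Mn m : ℝ) - 2) * cM m)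
              = -(((Mn m : ℝ) - 2) / ((Mn m : ℝ) + 2)) := by
            rw [hcM]; field_simp; try ring
          rw [hv, abs_le]
          have w0 : (0:ℝ) ≤ ((Mn m : ℝ) - 2) / ((Mn m : ℝ) + 2) :=
            div_nonneg (by linarith) hP.le
          have w1 : ((Mn m : ℝ) - 2) / ((Mn m : ℝ) + 2) ≤ 1 := by
            rw [div_le_one hP]; linarith
          constructor <;> linarith
        · rw [if_neg hji]
          have hv : cM m + cM m - (Mn m : ℝ)⁻¹ * (((Mn m : ℝ) - 2) * cM m) = 1 := by
            rw [hcM]; field_simp; try ring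
          rw [hv]
          norm_num
      · rw [if_neg (fun hc => hj hc.2)]
        have hv : cM m + 0 - (Mn m : ℝ)⁻¹ * (((Mn m : ℝ) - 2) * cM m)
            = 2 / ((Mn m : ℝ) + 2) := by
          rw [hcM]; field_simp; try ring
        rw [hv, abs_le]
        have w0 : (0:ℝ) ≤ 2 / ((Mn m : ℝ) + 2) := div_nonneg (by norm_num) hP.le
        have w1 : 2 / ((Mn m : ℝ) + 2) ≤ 1 := by rw [div_le_one hP]; linarith
        constructor <;> linarith
    · rw [if_neg (fun hc => hmn hc.1), GG_sum_level_ne n i m hmn, mul_zero, sub_zero, add_zero,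
        abs_le]
      have h1 := cM_pos n
      have h2 := cM_le_one n
      constructor <;> linarith
  -- the value on z0 - u n i
  have hval : φ (z0 Y e - u Y e n i) = 2 * ((Mn n : ℝ) - 1) / ((Mn n : ℝ) + 2) := by
    rw [map_sub]
    have h1 : φ (z0 Y e) = cM n := by
      have := phi_bv Y e hφT 0
      rw [z0, this, GG_single_zero]
    rw [h1, phi_u Y e hφT, GG_single_zero, GG_single_κ, if_pos ⟨rfl, hi⟩, if_pos rfl,
      GG_sum_level n i hi, hcM]
    field_simp
    ring
  have := le_NN_of Y e φ hφn hu (z0 Y e - u Y e n i)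
  rw [hval] at this
  exact this

lemma NN_sub_le_two {y : X} (hy : NN Y e y ≤ 1) : NN Y e (z0 Y e - y) ≤ 2 := by
  have h1 : NN Y e (z0 Y e - y) ≤ NN Y e (z0 Y e) + NN Y e (-y) := by
    have := NN_add Y e (z0 Y e) (-y)
    simpa [sub_eq_add_neg] using this
  have h2 : NN Y e (-y) = NN Y e y := by
    have := NN_smul Y e (-1) y
    simpa using this
  rw [NN_z0_eq_one Y e, h2] at h1
  linarith

lemma exists_slice_u (f : X →L[ℝ] ℝ) (ε : ℝ) (hfz : 1 - ε < f (z0 Y e)) (n : ℕ) :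
    ∃ i, i < Mn n ∧ 1 - ε < f (u Y e n i) := by
  by_contra h
  push_neg at h
  have havg : f (z0 Y e) = ∑ i ∈ Finset.range (Mn n), (Mn n : ℝ)⁻¹ * f (u Y e n i) := by
    rw [← avg_u Y e n, map_sum]
    exact Finset.sum_congr rfl (fun i _ => by rw [map_smul, smul_eq_mul])
  have hle : f (z0 Y e) ≤ 1 - ε := by
    rw [havg]
    have hinv : (0:ℝ) ≤ (Mn n : ℝ)⁻¹ := (inv_pos.mpr (Mn_pos n)).le
    calc ∑ i ∈ Finset.range (Mn n), (Mn n : ℝ)⁻¹ * f (u Y e n i)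
        ≤ ∑ _i ∈ Finset.range (Mn n), (Mn n : ℝ)⁻¹ * (1 - ε) := by
          refine Finset.sum_le_sum (fun i hi => ?_)
          exact mul_le_mul_of_nonneg_left (h i (Finset.mem_range.mp hi)) hinv
    _ = (Mn n : ℝ) * ((Mn n : ℝ)⁻¹ * (1 - ε)) := by
          rw [Finset.sum_const, Finset.card_range, nsmul_eq_mul]
    _ = 1 - ε := by rw [← mul_assoc, mul_inv_cancel₀ (Mn_pos n).ne', one_mul]
  linarith

end Constr

end DeltaRenorm

open DeltaRenorm

/-- If a real Banach space `X` contains an isomorphic (linearly homeomorphic) copy of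
`ℓ₁(ℕ, ℝ)` as a closed subspace, then `X` admits an equivalent norm with a Δ-point. -/
theorem renorming_deltaPoint_of_contains_l1
    (X : Type*) [NormedAddCommGroup X] [NormedSpace ℝ X] [CompleteSpace X]
    (hl1 : ∃ Y : Submodule ℝ X, IsClosed (Y : Set X) ∧
      Nonempty ((lp (fun _ : ℕ => ℝ) 1) ≃L[ℝ] Y)) :
    ∃ N : X → ℝ, IsEquivNorm X N ∧ HasDeltaPointForNorm X N := by
  obtain ⟨Y, -, ⟨e⟩⟩ := hl1
  refine ⟨NN Y e, ⟨NN_add Y e, NN_smul Y e, c0 Y e, Kc Y e, c0_pos Y e, Kc_pos Y e,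
    fun z => ⟨le_NN Y e z, NN_le Y e z⟩⟩, z0 Y e, NN_z0_eq_one Y e, ?_⟩
  intro f _hsup ε hε hfz
  have hz0S : z0 Y e ∈ {y : X | NN Y e y ≤ 1 ∧ 1 - ε < f y} :=
    ⟨(NN_z0_eq_one Y e).le, hfz⟩
  have hub : ∀ t ∈ (fun y => NN Y e (z0 Y e - y)) '' {y : X | NN Y e y ≤ 1 ∧ 1 - ε < f y},
      t ≤ 2 := by
    rintro t ⟨y, hy, rfl⟩
    exact NN_sub_le_two Y e hy.1
  have hbdd : BddAbove ((fun y => NN Y e (z0 Y e - y)) ''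
      {y : X | NN Y e y ≤ 1 ∧ 1 - ε < f y}) := ⟨2, hub⟩
  have hne : ((fun y => NN Y e (z0 Y e - y)) ''
      {y : X | NN Y e y ≤ 1 ∧ 1 - ε < f y}).Nonempty := ⟨_, Set.mem_image_of_mem _ hz0S⟩
  refine le_antisymm (csSup_le hne hub) ?_
  refine le_of_forall_pos_le_add (fun η hη => ?_)
  obtain ⟨n, hn⟩ := exists_nat_gt (6 / η)
  obtain ⟨i, hi, hfu⟩ := exists_slice_u Y e f ε hfz n
  have hmemS : u Y e n i ∈ {y : X | NN Y e y ≤ 1 ∧ 1 - ε < f y} := ⟨NN_u_le_one Y e n i, hfu⟩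
  have hle := le_csSup hbdd (Set.mem_image_of_mem (fun y => NN Y e (z0 Y e - y)) hmemS)
  have hdist := dist_lower Y e n i hi
  have hM : (Mn n : ℝ) = (n:ℝ) + 2 := by unfold Mn; push_cast; ring
  have h6 : 2 - 2 * ((Mn n : ℝ) - 1) / ((Mn n : ℝ) + 2) = 6 / ((n:ℝ) + 4) := by
    rw [hM]
    field_simp
    ring
  have hηn : 6 / ((n:ℝ) + 4) < η := by
    rw [div_lt_iff₀ (by positivity)]
    rw [div_lt_iff₀ hη] at hn
    nlinarith
  linarith
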